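/- Let K ≥ 2, let n_1, …, n_K be integers with n_k ≥ K for every k, set n = n_1 + ⋯ + n_K, and for each k let L_k be an n_k×n_k real symmetric positive semidefinite matrix with L_k·1_{n_k} = 0, with eigenvalues λ_1(L_k) ≤ ⋯ ≤ λ_{n_k}(L_k) in increasing order. Let p ≥ 0. Then there exists X ∈ ℝ^{n×(K−1)} with Xᵀ X = I_{K−1} and Xᵀ 1_n = 0 such that, writing X = [X_1ᵀ, …, X_Kᵀ]ᵀ with blocks X_k ∈ ℝ^{n_k×(K−1)}, Σ_{k=1}^{K} trace(X_kᵀ L_k X_k) + p·Σ_{k=1}^{K} (n − n_k)·trace(X_kᵀ X_k) ≤ min_{k∈{1,…,K}} [ Σ_{i=2}^{K} λ_i(L_k) + (K−1)·p·(n − n_k) ]. -/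

import Mathlib

open Matrix BigOperators

/-- The `k`-th row block of a matrix whose rows are indexed by the sigma type
`(k : Fin K) × Fin (nk k)`. -/
def blockOf {K d : ℕ} {nk : Fin K → ℕ}
    (X : Matrix ((k : Fin K) × Fin (nk k)) (Fin d) ℝ) (k : Fin K) :
    Matrix (Fin (nk k)) (Fin d) ℝ :=
  Matrix.of fun i j => X ⟨k, i⟩ j

/-!
Put all of `X` on a cluster `k₀` attaining the minimum, so that every cross-cluster term vanishes
and the penalty term is exactly `(K - 1) p (n - n_{k₀})`. On that cluster take the eigenvectors
`u₂, …, u_K` of `L = L_{k₀}`, except that an eigenvector `uᵢ` with eigenvalue `0` is replaced by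
a vector of an orthonormal basis of `ker L ∩ 1ᗮ`: as the eigenvalues are monotone and
nonnegative, `u₁, …, uᵢ` all lie in `ker L`, so this space has dimension at least `i - 1`.
Eigenvectors with nonzero eigenvalue are orthogonal to `ker L`, which contains `1`, so the
columns are orthonormal and centred, and the objective equals the bound.
-/

open Module
open scoped InnerProductSpace

section InnerProduct

variable {E : Type*} [NormedAddCommGroup E] [InnerProductSpace ℝ E]

lemma LinearMap.IsSymmetric.inner_eq_zero_of_apply_eq_smul {T : E →ₗ[ℝ] E} (hT : T.IsSymmetric)
    {u v : E} {c : ℝ} (hu : T u = c • u) (hc : c ≠ 0) (hv : T v = 0) : ⟪u, v⟫_ℝ = 0 := by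
  have : c * ⟪u, v⟫_ℝ = 0 := by
    rw [← real_inner_smul_left, ← hu, hT, hv, inner_zero_right]
  exact (mul_eq_zero.mp this).resolve_left hc

lemma LinearMap.IsPositive.nonneg_of_apply_eq_smul {T : E →ₗ[ℝ] E} (hT : T.IsPositive) {u : E}
    (hu : ‖u‖ = 1) {c : ℝ} (hTu : T u = c • u) : 0 ≤ c := by
  simpa [hTu, real_inner_smul_right, real_inner_self_eq_norm_sq, hu] using hT.inner_nonneg_right u

variable [FiniteDimensional ℝ E]

lemma Submodule.finrank_le_finrank_inf_orthogonal_span_singleton_add_one (W : Submodule ℝ E)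
    (v : E) : finrank ℝ W ≤ finrank ℝ ↥(W ⊓ (ℝ ∙ v)ᗮ) + 1 := by
  have hsup := Submodule.finrank_sup_add_finrank_inf_eq W (ℝ ∙ v)ᗮ
  have hperp := (ℝ ∙ v).finrank_add_finrank_orthogonal
  have hle := (W ⊔ (ℝ ∙ v)ᗮ).finrank_le
  have hspan : finrank ℝ (ℝ ∙ v) ≤ 1 := by
    simpa using finrank_span_le_card ({v} : Set E)
  omega

end InnerProduct

namespace LinearMap.IsPositive

variable {E : Type*} [NormedAddCommGroup E] [InnerProductSpace ℝ E] [FiniteDimensional ℝ E]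
  {T : E →ₗ[ℝ] E} {n : ℕ} {e : Fin n → E} {μ : Fin n → ℝ}

lemma le_finrank_ker_inf_orthogonal (hT : T.IsPositive) (he : Orthonormal ℝ e)
    (hTe : ∀ i, T (e i) = μ i • e i) (hμ : Monotone μ) (v : E) {i : Fin n} (hi : μ i = 0) :
    (i : ℕ) ≤ finrank ℝ ↥(ker T ⊓ (ℝ ∙ v)ᗮ) := by
  have hker : ∀ t : Fin (i + 1), e (Fin.castLE i.isLt t) ∈ ker T := by
    intro t
    have hle : μ (Fin.castLE i.isLt t) ≤ μ i := hμ (Nat.lt_succ_iff.mp t.isLt)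
    have h0 := hT.nonneg_of_apply_eq_smul (he.1 (Fin.castLE i.isLt t)) (hTe _)
    rw [mem_ker, hTe, le_antisymm (hi ▸ hle) h0, zero_smul]
  have hcard := ((he.comp _ (Fin.castLE_injective _)).codRestrict _ hker).linearIndependent
    |>.fintype_card_le_finrank
  have hdim := (ker T).finrank_le_finrank_inf_orthogonal_span_singleton_add_one v
  rw [Fintype.card_fin] at hcard
  omega

lemma exists_orthonormal_orthogonal_inner_apply_eq (hT : T.IsPositive) (he : Orthonormal ℝ e)
    (hTe : ∀ i, T (e i) = μ i • e i) (hμ : Monotone μ) {v : E} (hv : T v = 0) {m : ℕ}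
    (hm : m < n) :
    ∃ x : Fin m → E, Orthonormal ℝ x ∧ (∀ j, ⟪x j, v⟫_ℝ = 0) ∧
      ∀ j, ⟪x j, T (x j)⟫_ℝ = μ ⟨j + 1, by omega⟩ := by
  classical
  set W := ker T ⊓ (ℝ ∙ v)ᗮ
  set b := stdOrthonormalBasis ℝ W
  set succ : Fin m → Fin n := fun j => ⟨j + 1, by omega⟩
  have hsucc : Function.Injective succ := fun j j' h => by
    simpa [succ, Fin.ext_iff] using h
  have hW : ∀ j, μ (succ j) = 0 → (j : ℕ) < finrank ℝ W := fun j h =>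
    hT.le_finrank_ker_inf_orthogonal he hTe hμ v h
  have hker : ∀ j, μ (succ j) ≠ 0 → ∀ w ∈ ker T, ⟪e (succ j), w⟫_ℝ = 0 := fun j h w hw =>
    hT.isSymmetric.inner_eq_zero_of_apply_eq_smul (hTe _) h hw
  refine ⟨fun j => if h : μ (succ j) = 0 then (b ⟨j, hW j h⟩ : E) else e (succ j), ?_, ?_, ?_⟩
  · rw [orthonormal_iff_ite]
    intro j j'
    by_cases h : μ (succ j) = 0 <;> by_cases h' : μ (succ j') = 0
    · rw [dif_pos h, dif_pos h']
      simpa [Fin.ext_iff] using orthonormal_iff_ite.mp b.orthonormal ⟨j, hW j h⟩ ⟨j', hW j' h'⟩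
    · rw [dif_pos h, dif_neg h', real_inner_comm, hker j' h' _ (b _).2.1, if_neg]
      rintro rfl
      exact h' h
    · rw [dif_neg h, dif_pos h', hker j h _ (b _).2.1, if_neg]
      rintro rfl
      exact h h'
    · rw [dif_neg h, dif_neg h']
      exact orthonormal_iff_ite.mp (he.comp succ hsucc) j j'
  · intro j
    dsimp only
    split_ifs with h
    · exact Submodule.mem_orthogonal_singleton_iff_inner_left.mp (b _).2.2
    · exact hker j h v hv
  · intro j
    dsimp only
    split_ifs with h
    · rw [(b _).2.1, inner_zero_right, h]
    · rw [hTe, real_inner_smul_right, real_inner_self_eq_norm_sq, he.1, one_pow, mul_one]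

end LinearMap.IsPositive

section Spectral

variable {n : Type*} [Fintype n] [DecidableEq n] {L U : Matrix n n ℝ} {μ : n → ℝ}

lemma orthonormal_toLp_transpose_apply (hU : Uᵀ * U = 1) :
    Orthonormal ℝ fun i => WithLp.toLp 2 (Uᵀ i) := by
  rw [← gram_eq_one_iff_orthonormal, gram_eq_conjTranspose_mul (EuclideanSpace.basisFun n ℝ),
    conjTranspose_eq_transpose_of_trivial]
  exact hU

lemma toEuclideanLin_toLp_transpose_apply (hU : Uᵀ * U = 1) (hdec : L = U * diagonal μ * Uᵀ)
    (i : n) : toEuclideanLin L (WithLp.toLp 2 (Uᵀ i)) = μ i • WithLp.toLp 2 (Uᵀ i) := by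
  have hLU : L * U = U * diagonal μ := by
    rw [hdec, Matrix.mul_assoc, Matrix.mul_assoc, hU, Matrix.mul_one]
  ext a
  have := congrFun (congrFun hLU a) i
  rw [mul_diagonal, mul_apply', mul_comm] at this
  exact this

end Spectral

lemma exists_transpose_mul_self_eq_one_and_trace_eq {n m : ℕ} (hm : m < n)
    {L U : Matrix (Fin n) (Fin n) ℝ} {μ : Fin n → ℝ} (hL : L.PosSemidef)
    (hL1 : L *ᵥ (fun _ => (1 : ℝ)) = 0) (hμ : Monotone μ) (hU : Uᵀ * U = 1)
    (hdec : L = U * diagonal μ * Uᵀ) :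
    ∃ Y : Matrix (Fin n) (Fin m) ℝ, Yᵀ * Y = 1 ∧ Yᵀ *ᵥ (fun _ => (1 : ℝ)) = 0 ∧
      (Yᵀ * L * Y).trace = ∑ j : Fin m, μ ⟨j + 1, by omega⟩ := by
  obtain ⟨x, hx, hx1, hxL⟩ :=
    (isPositive_toEuclideanLin_iff.mpr hL).exists_orthonormal_orthogonal_inner_apply_eq
      (orthonormal_toLp_transpose_apply hU) (toEuclideanLin_toLp_transpose_apply hU hdec) hμ
      (v := WithLp.toLp 2 fun _ => 1) (congrArg (WithLp.toLp 2) hL1) hm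
  refine ⟨of fun a j => x j a, ?_, ?_, ?_⟩
  · rw [← gram_eq_one_iff_orthonormal.mpr hx,
      gram_eq_conjTranspose_mul (EuclideanSpace.basisFun _ ℝ), conjTranspose_eq_transpose_of_trivial]
    rfl
  · ext j
    rw [Pi.zero_apply, ← hx1 j]
    simp [mulVec, dotProduct, EuclideanSpace.inner_eq_star_dotProduct]
  · rw [Matrix.mul_assoc]
    refine Finset.sum_congr rfl fun j _ => ?_
    rw [← hxL j]
    simp [mul_apply, EuclideanSpace.inner_eq_star_dotProduct, dotProduct, mulVec, Finset.mul_sum,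
      mul_comm]

section Stack

variable {ι α d : Type*} {κ : ι → Type*}

def stackRows (Y : (i : ι) → Matrix (κ i) d α) : Matrix ((i : ι) × κ i) d α :=
  Matrix.of fun q j => Y q.1 q.2 j

variable [Fintype ι] [∀ i, Fintype (κ i)] [NonUnitalNonAssocSemiring α]

lemma stackRows_transpose_mul_self (Y : (i : ι) → Matrix (κ i) d α) :
    (stackRows Y)ᵀ * stackRows Y = ∑ i, (Y i)ᵀ * Y i := by
  ext j j'
  simp [stackRows, mul_apply, Fintype.sum_sigma, Matrix.sum_apply]

lemma stackRows_transpose_mulVec [Fintype d] (Y : (i : ι) → Matrix (κ i) d α)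
    (v : (i : ι) × κ i → α) :
    (stackRows Y)ᵀ *ᵥ v = ∑ i, (Y i)ᵀ *ᵥ fun a => v ⟨i, a⟩ := by
  ext j
  simp [stackRows, mulVec, dotProduct, Fintype.sum_sigma, Finset.sum_apply]

end Stack

lemma blockOf_stackRows {K d : ℕ} {nk : Fin K → ℕ}
    (Y : (k : Fin K) → Matrix (Fin (nk k)) (Fin d) ℝ) (k : Fin K) :
    blockOf (stackRows Y) k = Y k :=
  rfl

lemma Fin.sum_filter_one_le_and_lt {M : Type*} [AddCommMonoid M] {n K : ℕ} (hK : K ≤ n)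
    (f : Fin n → M) :
    ∑ i ∈ Finset.univ.filter (fun i : Fin n => 1 ≤ (i : ℕ) ∧ (i : ℕ) < K), f i
      = ∑ j : Fin (K - 1), f ⟨j + 1, by omega⟩ := by
  symm
  refine Finset.sum_bij (fun j _ => ⟨j + 1, by omega⟩) (fun j _ => ?_) (fun j _ j' _ h => ?_)
    (fun i hi => ?_) (fun _ _ => rfl)
  · simp only [Finset.mem_filter, Finset.mem_univ, true_and]
    omega
  · simpa [Fin.ext_iff] using h
  · simp only [Finset.mem_filter, Finset.mem_univ, true_and] at hi
    exact ⟨⟨i - 1, by omega⟩, Finset.mem_univ _, Fin.ext (by simp only; omega)⟩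

/-- Deterministic upper bound (Case 2 of Theorem 2): for cluster Laplacians `Lₖ`
(symmetric PSD, `Lₖ 1 = 0`, eigenvalues listed increasingly by `μ k` via an orthogonal
diagonalization) and any `p ≥ 0`, there is a feasible `X ∈ ℝ^{n×(K-1)}` (orthonormal,
centered columns) with
`∑ₖ trace(Xₖᵀ Lₖ Xₖ) + p·∑ₖ (n - nₖ)·trace(Xₖᵀ Xₖ)
  ≤ minₖ [ ∑_{i=2}^{K} λᵢ(Lₖ) + (K-1)·p·(n - nₖ) ]`. -/
theorem stmt9 (K : ℕ) (hK : 2 ≤ K) (nk : Fin K → ℕ) (hnk : ∀ k, K ≤ nk k)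
    (L : (k : Fin K) → Matrix (Fin (nk k)) (Fin (nk k)) ℝ)
    (hPSD : ∀ k, (L k).PosSemidef)
    (hL1 : ∀ k, (L k).mulVec (fun _ => (1 : ℝ)) = 0)
    (μ : (k : Fin K) → Fin (nk k) → ℝ) (hμ : ∀ k, Monotone (μ k))
    (U : (k : Fin K) → Matrix (Fin (nk k)) (Fin (nk k)) ℝ)
    (hU : ∀ k, (U k)ᵀ * U k = 1)
    (hdec : ∀ k, L k = U k * Matrix.diagonal (μ k) * (U k)ᵀ)
    (p : ℝ) :
    ∃ X : Matrix ((k : Fin K) × Fin (nk k)) (Fin (K - 1)) ℝ,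
      Xᵀ * X = 1 ∧
      Xᵀ.mulVec (fun _ => (1 : ℝ)) = 0 ∧
      ∑ k : Fin K, ((blockOf X k)ᵀ * L k * blockOf X k).trace
          + p * ∑ k : Fin K, (((∑ l : Fin K, nk l : ℕ) : ℝ) - (nk k : ℕ))
              * ((blockOf X k)ᵀ * blockOf X k).trace
        ≤ Finset.univ.inf'
            (Finset.univ_nonempty_iff.mpr (Fin.pos_iff_nonempty.mp (by omega)))
            (fun k =>
              (∑ i ∈ Finset.univ.filter
                  (fun i : Fin (nk k) => 1 ≤ (i : ℕ) ∧ (i : ℕ) < K), μ k i)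
                + ((K : ℝ) - 1) * p * (((∑ l : Fin K, nk l : ℕ) : ℝ) - (nk k : ℕ))) := by
  refine (Finset.exists_mem_eq_inf' _ _).elim fun k₀ ⟨_, hmin⟩ => hmin ▸ ?_
  obtain ⟨Y, hYY, hY1, hYL⟩ := exists_transpose_mul_self_eq_one_and_trace_eq (m := K - 1)
    (by have := hnk k₀; omega) (hPSD k₀) (hL1 k₀) (hμ k₀) (hU k₀) (hdec k₀)
  refine ⟨stackRows (Pi.single k₀ Y), ?_, ?_, ?_⟩
  · rw [stackRows_transpose_mul_self, Fintype.sum_eq_single k₀ fun k hk => by simp [hk],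
      Pi.single_eq_same, hYY]
  · rw [stackRows_transpose_mulVec, Fintype.sum_eq_single k₀ fun k hk => by simp [hk],
      Pi.single_eq_same, hY1]
  · simp only [blockOf_stackRows]
    rw [Fintype.sum_eq_single k₀ fun k hk => by simp [hk],
      Fintype.sum_eq_single k₀ fun k hk => by simp [hk], Pi.single_eq_same, hYL, hYY, trace_one,
      Fin.sum_filter_one_le_and_lt (hnk k₀), Fintype.card_fin, Nat.cast_pred (by omega)]
    exact le_of_eq (by ring)
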